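/- arXiv:1805.07812 — 7 statements merged into one kernel-verified Lean document; each statement's English description precedes it below -/
import Mathlib

section
/- If F : G → H is a partial functor of inverse categories, then for every morphism g of G, F(g*) = F(g)*, i.e., F commutes with the generalized inverse operation. -/
/- An inverse category is a category in which every morphism `g` has a unique
generalized inverse `g*` with `g g* g = g` and `g* g g* = g*`.
Composition convention: for `g : X ⟶ Y` and `h : Y ⟶ Z`, `g ≫ h : X ⟶ Z`
(apply `g` first).  The paper's product `gh` (with `d(g) = c(h)`) corresponds
to `h ≫ g` in this convention. -/

open CategoryTheory

class InverseCategory (C : Type u) [Category.{v} C] : Prop where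
  exists_star : ∀ {X Y : C} (g : X ⟶ Y), ∃! h : Y ⟶ X,
    g ≫ h ≫ g = g ∧ h ≫ g ≫ h = h

noncomputable def InverseCategory.star {C : Type u} [Category.{v} C] [InverseCategory C]
    {X Y : C} (g : X ⟶ Y) : Y ⟶ X :=
  (InverseCategory.exists_star g).choose

/-- A partial functor of inverse categories: (I1) is built into the typing of `map`,
(I2) is `map_id`, and (I3) is the pair `cond₁`, `cond₂`. -/
structure PartialFunctor (G : Type u₁) (H : Type u₂) [Category.{v₁} G] [Category.{v₂} H]
    [InverseCategory G] [InverseCategory H] where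
  obj : G → H
  map : ∀ {X Y : G}, (X ⟶ Y) → (obj X ⟶ obj Y)
  map_id : ∀ X : G, map (𝟙 X) = 𝟙 (obj X)
  cond₁ : ∀ {X Y Z : G} (h : X ⟶ Y) (g : Y ⟶ Z),
    map h ≫ map g = map (h ≫ g) ≫ InverseCategory.star (map g) ≫ map g
  cond₂ : ∀ {X Y Z : G} (h : X ⟶ Y) (g : Y ⟶ Z),
    map h ≫ map g = map h ≫ InverseCategory.star (map h) ≫ map (h ≫ g)

/-- A partial functor of inverse categories commutes with the
generalized inverse operation: `F(g*) = F(g)*`. -/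
theorem partialFunctor_map_star {G : Type u₁} {H : Type u₂}
    [Category.{v₁} G] [Category.{v₂} H] [InverseCategory G] [InverseCategory H]
    (F : PartialFunctor G H) {X Y : G} (g : X ⟶ Y) :
    F.map (InverseCategory.star g) = InverseCategory.star (F.map g) := by
  set a := F.map g with ha
  set b := F.map (InverseCategory.star g) with hb
  -- basic star properties in G
  have hg1 : g ≫ InverseCategory.star g ≫ g = g :=
    (InverseCategory.exists_star g).choose_spec.1.1
  have hg2 : InverseCategory.star g ≫ g ≫ InverseCategory.star g =
      InverseCategory.star g :=
    (InverseCategory.exists_star g).choose_spec.1.2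
  -- basic star properties of a in H
  have ha1 : a ≫ InverseCategory.star a ≫ a = a :=
    (InverseCategory.exists_star a).choose_spec.1.1
  -- basic star properties of b in H
  have hb1 : b ≫ InverseCategory.star b ≫ b = b :=
    (InverseCategory.exists_star b).choose_spec.1.1
  -- F(g ≫ g*) ≫ a = a
  have hFfa : F.map (g ≫ InverseCategory.star g) ≫ a = a := by
    have h := F.cond₁ (g ≫ InverseCategory.star g) g
    have hcomp : (g ≫ InverseCategory.star g) ≫ g = g := by
      rw [Category.assoc, hg1]
    rw [hcomp, ← ha] at h
    calc F.map (g ≫ InverseCategory.star g) ≫ a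
        = F.map (g ≫ InverseCategory.star g) ≫ F.map g := by rw [← ha]
      _ = a ≫ InverseCategory.star a ≫ a := h
      _ = a := ha1
  -- F(g* ≫ g) ≫ b = b
  have hFeb : F.map (InverseCategory.star g ≫ g) ≫ b = b := by
    have h := F.cond₁ (InverseCategory.star g ≫ g) (InverseCategory.star g)
    have hcomp : (InverseCategory.star g ≫ g) ≫ InverseCategory.star g =
        InverseCategory.star g := by
      rw [Category.assoc, hg2]
    rw [hcomp, ← hb] at h
    calc F.map (InverseCategory.star g ≫ g) ≫ b
        = F.map (InverseCategory.star g ≫ g) ≫ F.map (InverseCategory.star g) := by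
          rw [← hb]
      _ = b ≫ InverseCategory.star b ≫ b := h
      _ = b := hb1
  -- a ≫ b
  have hab : a ≫ b = a ≫ InverseCategory.star a ≫ F.map (g ≫ InverseCategory.star g) := by
    have h := F.cond₂ g (InverseCategory.star g)
    rw [← ha, ← hb] at h
    exact h
  -- b ≫ a
  have hba : b ≫ a = b ≫ InverseCategory.star b ≫ F.map (InverseCategory.star g ≫ g) := by
    have h := F.cond₂ (InverseCategory.star g) g
    rw [← ha, ← hb] at h
    exact h
  -- a ≫ b ≫ a = a
  have key1 : a ≫ b ≫ a = a := by
    calc a ≫ b ≫ a = (a ≫ b) ≫ a := by rw [Category.assoc]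
      _ = (a ≫ InverseCategory.star a ≫ F.map (g ≫ InverseCategory.star g)) ≫ a := by
          rw [hab]
      _ = a ≫ InverseCategory.star a ≫
            (F.map (g ≫ InverseCategory.star g) ≫ a) := by
          simp only [Category.assoc]
      _ = a ≫ InverseCategory.star a ≫ a := by rw [hFfa]
      _ = a := ha1
  -- b ≫ a ≫ b = b
  have key2 : b ≫ a ≫ b = b := by
    calc b ≫ a ≫ b = (b ≫ a) ≫ b := by rw [Category.assoc]
      _ = (b ≫ InverseCategory.star b ≫ F.map (InverseCategory.star g ≫ g)) ≫ b := by
          rw [hba]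
      _ = b ≫ InverseCategory.star b ≫
            (F.map (InverseCategory.star g ≫ g) ≫ b) := by
          simp only [Category.assoc]
      _ = b ≫ InverseCategory.star b ≫ b := by rw [hFeb]
      _ = b := hb1
  exact (InverseCategory.exists_star a).choose_spec.2 b ⟨key1, key2⟩
end

section
/- The composition of two partial functors of inverse categories is again a partial functor of inverse categories. -/
/- An inverse category is a category in which every morphism `g` has a unique
generalized inverse `g*` with `g g* g = g` and `g* g g* = g*`.
Composition convention: for `g : X ⟶ Y` and `h : Y ⟶ Z`, `g ≫ h : X ⟶ Z`
(apply `g` first).  The paper's product `gh` (with `d(g) = c(h)`) corresponds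
to `h ≫ g` in this convention. -/

open CategoryTheory

section Aux

variable {C : Type u} [Category.{v} C] [InverseCategory C]

lemma ic_spec {X Y : C} (g : X ⟶ Y) :
    g ≫ InverseCategory.star g ≫ g = g ∧
    InverseCategory.star g ≫ g ≫ InverseCategory.star g = InverseCategory.star g :=
  (InverseCategory.exists_star g).choose_spec.1

lemma ic_unique {X Y : C} (g : X ⟶ Y) (h : Y ⟶ X)
    (h1 : g ≫ h ≫ g = g) (h2 : h ≫ g ≫ h = h) : h = InverseCategory.star g :=
  (InverseCategory.exists_star g).choose_spec.2 h ⟨h1, h2⟩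

lemma ic_sstar {X Y : C} (g : X ⟶ Y) :
    InverseCategory.star (InverseCategory.star g) = g :=
  (ic_unique (InverseCategory.star g) g (ic_spec g).2 (ic_spec g).1).symm

lemma ic_sidem {X : C} {e : X ⟶ X} (he : e ≫ e = e) : InverseCategory.star e = e :=
  (ic_unique e e (by rw [he, he]) (by rw [he, he])).symm

lemma ic_comp_idem {X : C} {e f : X ⟶ X} (he : e ≫ e = e) (hf : f ≫ f = f) :
    (e ≫ f) ≫ (e ≫ f) = e ≫ f := by
  set x := InverseCategory.star (e ≫ f) with hx
  have hs1 : (e ≫ f) ≫ x ≫ (e ≫ f) = e ≫ f := (ic_spec (e ≫ f)).1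
  have hs2 : x ≫ (e ≫ f) ≫ x = x := (ic_spec (e ≫ f)).2
  have hy : f ≫ x ≫ e = x := by
    apply ic_unique
    · calc (e ≫ f) ≫ (f ≫ x ≫ e) ≫ (e ≫ f)
          = e ≫ (f ≫ f) ≫ x ≫ (e ≫ e) ≫ f := by simp only [Category.assoc]
        _ = (e ≫ f) ≫ x ≫ (e ≫ f) := by rw [he, hf]; simp only [Category.assoc]
        _ = e ≫ f := hs1
    · calc (f ≫ x ≫ e) ≫ (e ≫ f) ≫ (f ≫ x ≫ e)
          = f ≫ x ≫ (e ≫ e) ≫ (f ≫ f) ≫ x ≫ e := by simp only [Category.assoc]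
        _ = f ≫ (x ≫ (e ≫ f) ≫ x) ≫ e := by rw [he, hf]; simp only [Category.assoc]
        _ = f ≫ x ≫ e := by rw [hs2]
  have hxidem : x ≫ x = x := by
    calc x ≫ x = (f ≫ x ≫ e) ≫ (f ≫ x ≫ e) := by rw [hy]
      _ = f ≫ (x ≫ (e ≫ f) ≫ x) ≫ e := by simp only [Category.assoc]
      _ = f ≫ x ≫ e := by rw [hs2]
      _ = x := hy
  have hg : e ≫ f = x := by
    have h1 : InverseCategory.star x = x := ic_sidem hxidem
    have h2 : InverseCategory.star x = e ≫ f := by rw [hx]; exact ic_sstar (e ≫ f)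
    rw [h1] at h2
    exact h2.symm
  rw [hg, hxidem]

lemma ic_idem_comm {X : C} {e f : X ⟶ X} (he : e ≫ e = e) (hf : f ≫ f = f) :
    e ≫ f = f ≫ e := by
  have h1 : (e ≫ f) ≫ (e ≫ f) = e ≫ f := ic_comp_idem he hf
  have h2 : (f ≫ e) ≫ (f ≫ e) = f ≫ e := ic_comp_idem hf he
  have key : f ≫ e = InverseCategory.star (e ≫ f) := by
    apply ic_unique
    · calc (e ≫ f) ≫ (f ≫ e) ≫ (e ≫ f)
          = e ≫ (f ≫ f) ≫ (e ≫ e) ≫ f := by simp only [Category.assoc]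
        _ = (e ≫ f) ≫ (e ≫ f) := by rw [he, hf]; simp only [Category.assoc]
        _ = e ≫ f := h1
    · calc (f ≫ e) ≫ (e ≫ f) ≫ (f ≫ e)
          = f ≫ (e ≫ e) ≫ (f ≫ f) ≫ e := by simp only [Category.assoc]
        _ = (f ≫ e) ≫ (f ≫ e) := by rw [he, hf]; simp only [Category.assoc]
        _ = f ≫ e := h2
  rw [ic_sidem h1] at key
  exact key.symm

end Aux

section PF

variable {G : Type u₁} {H : Type u₂} [Category.{v₁} G] [Category.{v₂} H]
  [InverseCategory G] [InverseCategory H]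

lemma PartialFunctor.map_idem (F : PartialFunctor G H) {X : G} {e : X ⟶ X}
    (he : e ≫ e = e) : F.map e ≫ F.map e = F.map e := by
  have h := F.cond₂ e e
  rw [he] at h
  rw [h]
  exact (ic_spec (F.map e)).1

end PF

/-- The composition of two partial functors of inverse categories is
again a partial functor of inverse categories: the composite maps preserve identities
and satisfy (I3). -/
theorem partialFunctor_comp {G : Type u₁} {G' : Type u₂} {G'' : Type u₃}
    [Category.{v₁} G] [Category.{v₂} G'] [Category.{v₃} G'']
    [InverseCategory G] [InverseCategory G'] [InverseCategory G'']
    (F : PartialFunctor G G') (F' : PartialFunctor G' G'') :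
    (∀ X : G, F'.map (F.map (𝟙 X)) = 𝟙 (F'.obj (F.obj X))) ∧
    (∀ {X Y Z : G} (h : X ⟶ Y) (g : Y ⟶ Z),
      F'.map (F.map h) ≫ F'.map (F.map g) =
        F'.map (F.map (h ≫ g)) ≫ InverseCategory.star (F'.map (F.map g)) ≫
          F'.map (F.map g)) ∧
    (∀ {X Y Z : G} (h : X ⟶ Y) (g : Y ⟶ Z),
      F'.map (F.map h) ≫ F'.map (F.map g) =
        F'.map (F.map h) ≫ InverseCategory.star (F'.map (F.map h)) ≫
          F'.map (F.map (h ≫ g))) := by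
  refine ⟨fun X => by rw [F.map_id, F'.map_id], ?_, ?_⟩
  · -- (I3), first equation, for the composite
    intro X Y Z h g
    set a := F.map h with ha
    set b := F.map g with hb
    set c := F.map (h ≫ g) with hc
    set e : F.obj Z ⟶ F.obj Z := InverseCategory.star b ≫ b with hedef
    set A := F'.map a with hA
    set B := F'.map b with hB
    set C := F'.map c with hC
    set E := F'.map e with hE
    -- in G' : a ≫ b = c ≫ e
    have hab : a ≫ b = c ≫ e := by
      have := F.cond₁ h g
      rw [hedef]; simpa only [Category.assoc] using this
    have he : e ≫ e = e := by
      rw [hedef]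
      calc (InverseCategory.star b ≫ b) ≫ (InverseCategory.star b ≫ b)
          = (InverseCategory.star b ≫ b ≫ InverseCategory.star b) ≫ b := by
            simp only [Category.assoc]
        _ = InverseCategory.star b ≫ b := by rw [(ic_spec b).2]
    have hEE : E ≫ E = E := F'.map_idem he
    have hpp : (InverseCategory.star B ≫ B) ≫ (InverseCategory.star B ≫ B) =
        InverseCategory.star B ≫ B := by
      calc (InverseCategory.star B ≫ B) ≫ (InverseCategory.star B ≫ B)
          = (InverseCategory.star B ≫ B ≫ InverseCategory.star B) ≫ B := by
            simp only [Category.assoc]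
        _ = InverseCategory.star B ≫ B := by rw [(ic_spec B).2]
    have hbe : b ≫ e = b := by rw [hedef]; exact (ic_spec b).1
    have hBE : B ≫ E = B := by
      have h2 := F'.cond₂ b e
      rw [hbe, ← hB, ← hE] at h2
      rw [h2, hB]
      exact (ic_spec (F'.map b)).1
    have hpE : (InverseCategory.star B ≫ B) ≫ E = InverseCategory.star B ≫ B := by
      rw [Category.assoc, hBE]
    have hEp : E ≫ (InverseCategory.star B ≫ B) = InverseCategory.star B ≫ B := by
      rw [ic_idem_comm hEE hpp, hpE]
    have hCE : C ≫ E = F'.map (c ≫ e) ≫ E := by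
      have h1 := F'.cond₁ c e
      rw [← hE, ic_sidem hEE, ← hC] at h1
      calc C ≫ E = F'.map (c ≫ e) ≫ E ≫ E := h1
        _ = F'.map (c ≫ e) ≫ E := by rw [hEE]
    have step1 : A ≫ B = F'.map (c ≫ e) ≫ InverseCategory.star B ≫ B := by
      have h1 := F'.cond₁ a b
      rw [hab, ← hA, ← hB] at h1
      exact h1
    calc A ≫ B = F'.map (c ≫ e) ≫ InverseCategory.star B ≫ B := step1
      _ = F'.map (c ≫ e) ≫ E ≫ (InverseCategory.star B ≫ B) := by rw [hEp]
      _ = (F'.map (c ≫ e) ≫ E) ≫ (InverseCategory.star B ≫ B) := by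
          simp only [Category.assoc]
      _ = (C ≫ E) ≫ (InverseCategory.star B ≫ B) := by rw [hCE]
      _ = C ≫ E ≫ (InverseCategory.star B ≫ B) := by simp only [Category.assoc]
      _ = C ≫ InverseCategory.star B ≫ B := by rw [hEp]
  · -- (I3), second equation, for the composite
    intro X Y Z h g
    set a := F.map h with ha
    set b := F.map g with hb
    set c := F.map (h ≫ g) with hc
    set f : F.obj X ⟶ F.obj X := a ≫ InverseCategory.star a with hfdef
    set A := F'.map a with hA
    set B := F'.map b with hB
    set C := F'.map c with hC
    set E := F'.map f with hE
    have hab : a ≫ b = f ≫ c := by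
      have := F.cond₂ h g
      rw [hfdef]; simpa only [Category.assoc] using this
    have hf : f ≫ f = f := by
      rw [hfdef]
      calc (a ≫ InverseCategory.star a) ≫ (a ≫ InverseCategory.star a)
          = (a ≫ InverseCategory.star a ≫ a) ≫ InverseCategory.star a := by
            simp only [Category.assoc]
        _ = a ≫ InverseCategory.star a := by rw [(ic_spec a).1]
    have hEE : E ≫ E = E := F'.map_idem hf
    have hqq : (A ≫ InverseCategory.star A) ≫ (A ≫ InverseCategory.star A) =
        A ≫ InverseCategory.star A := by
      calc (A ≫ InverseCategory.star A) ≫ (A ≫ InverseCategory.star A)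
          = (A ≫ InverseCategory.star A ≫ A) ≫ InverseCategory.star A := by
            simp only [Category.assoc]
        _ = A ≫ InverseCategory.star A := by rw [(ic_spec A).1]
    have hfa : f ≫ a = a := by rw [hfdef, Category.assoc]; exact (ic_spec a).1
    have hEA : E ≫ A = A := by
      have h1 := F'.cond₁ f a
      rw [hfa, ← hE, ← hA] at h1
      rw [h1]
      exact (ic_spec A).1
    have hEq : E ≫ (A ≫ InverseCategory.star A) = A ≫ InverseCategory.star A := by
      rw [← Category.assoc, hEA]
    have hqE : (A ≫ InverseCategory.star A) ≫ E = A ≫ InverseCategory.star A := by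
      rw [ic_idem_comm hqq hEE, hEq]
    have hEC : E ≫ C = E ≫ F'.map (f ≫ c) := by
      have h2 := F'.cond₂ f c
      rw [← hE, ic_sidem hEE, ← hC] at h2
      calc E ≫ C = E ≫ E ≫ F'.map (f ≫ c) := h2
        _ = (E ≫ E) ≫ F'.map (f ≫ c) := by simp only [Category.assoc]
        _ = E ≫ F'.map (f ≫ c) := by rw [hEE]
    have step1 : A ≫ B = A ≫ InverseCategory.star A ≫ F'.map (f ≫ c) := by
      have h2 := F'.cond₂ a b
      rw [hab, ← hA, ← hB] at h2
      exact h2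
    calc A ≫ B = (A ≫ InverseCategory.star A) ≫ F'.map (f ≫ c) := by
          rw [step1]; simp only [Category.assoc]
      _ = ((A ≫ InverseCategory.star A) ≫ E) ≫ F'.map (f ≫ c) := by rw [hqE]
      _ = (A ≫ InverseCategory.star A) ≫ (E ≫ F'.map (f ≫ c)) := by
          simp only [Category.assoc]
      _ = (A ≫ InverseCategory.star A) ≫ (E ≫ C) := by rw [hEC]
      _ = ((A ≫ InverseCategory.star A) ≫ E) ≫ C := by simp only [Category.assoc]
      _ = (A ≫ InverseCategory.star A) ≫ C := by rw [hqE]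
      _ = A ≫ InverseCategory.star A ≫ C := by simp only [Category.assoc]
end

section
/- If F : G → H is a partial functor of inverse categories and H is a groupoid, then F is an ordinary functor, i.e., F(gh) = F(g)F(h) for all composable pairs (g,h). -/
/- An inverse category is a category in which every morphism `g` has a unique
generalized inverse `g*` with `g g* g = g` and `g* g g* = g*`.
Composition convention: for `g : X ⟶ Y` and `h : Y ⟶ Z`, `g ≫ h : X ⟶ Z`
(apply `g` first).  The paper's product `gh` (with `d(g) = c(h)`) corresponds
to `h ≫ g` in this convention. -/

open CategoryTheory

/-- A partial functor of inverse categories into a groupoid is an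
ordinary functor: `F(gh) = F(g)F(h)` for all composable pairs. -/
theorem partialFunctor_toGroupoid_functorial {G : Type u₁} {H : Type u₂}
    [Category.{v₁} G] [Groupoid.{v₂} H] [InverseCategory G] [InverseCategory H]
    (F : PartialFunctor G H) {X Y Z : G} (h : X ⟶ Y) (g : Y ⟶ Z) :
    F.map (h ≫ g) = F.map h ≫ F.map g := by
  have star_eq : ∀ {A B : H} (f : A ⟶ B), InverseCategory.star f = Groupoid.inv f := by
    intro A B f
    exact ((InverseCategory.exists_star f).choose_spec.2 (Groupoid.inv f)
      ⟨by simp, by simp⟩).symm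
  have := F.cond₁ h g
  rw [star_eq, Groupoid.inv_comp, Category.comp_id] at this
  exact this.symm
end

section
/- Let (I,J,P,Q,α,β) be a set of pre-equivalence data in which α (or β) is surjective. Then α (resp. β) is in fact an isomorphism. -/
open MulOpposite

/-- Let `(I, J, P, Q, α, β)` be a set of pre-equivalence data:
`I`, `J` are rings, `P` an `I`-`J`-bimodule, `Q` a `J`-`I`-bimodule,
`α : P ⊗_J Q → I` an `I`-bimodule map and `β : Q ⊗_I P → J` a `J`-bimodule map,
satisfying `α(p⊗q)p' = p·β(q⊗p')` and `β(q⊗p)q' = q·α(p⊗q')`.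
Since Mathlib has no tensor product of bimodules over a noncommutative ring, the
tensor products are encoded by their universal property: `T` (resp. `T'`) is an
additive group with a biadditive `J`-balanced (resp. `I`-balanced) map `t`
(resp. `t'`) through which every biadditive balanced map factors uniquely.
Conclusion: if `α` (or `β`) is surjective, then it is bijective. -/
theorem preEquivalenceData_surjective_bijective
    {I J P Q : Type u} [Ring I] [Ring J]
    [AddCommGroup P] [Module I P] [Module Jᵐᵒᵖ P] [SMulCommClass I Jᵐᵒᵖ P]
    [AddCommGroup Q] [Module J Q] [Module Iᵐᵒᵖ Q] [SMulCommClass J Iᵐᵒᵖ Q]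
    -- the tensor product `T = P ⊗_J Q`, via its universal property
    {T : Type u} [AddCommGroup T] (t : P → Q → T)
    (tadd₁ : ∀ p p' q, t (p + p') q = t p q + t p' q)
    (tadd₂ : ∀ p q q', t p (q + q') = t p q + t p q')
    (tbal : ∀ (j : J) p q, t (op j • p) q = t p (j • q))
    (tuniv : ∀ (M : Type u) [AddCommGroup M] (b : P → Q → M),
      (∀ p p' q, b (p + p') q = b p q + b p' q) →
      (∀ p q q', b p (q + q') = b p q + b p q') →
      (∀ (j : J) p q, b (op j • p) q = b p (j • q)) →
      ∃! φ : T →+ M, ∀ p q, φ (t p q) = b p q)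
    -- the tensor product `T' = Q ⊗_I P`, via its universal property
    {T' : Type u} [AddCommGroup T'] (t' : Q → P → T')
    (t'add₁ : ∀ q q' p, t' (q + q') p = t' q p + t' q' p)
    (t'add₂ : ∀ q p p', t' q (p + p') = t' q p + t' q p')
    (t'bal : ∀ (i : I) q p, t' (op i • q) p = t' q (i • p))
    (t'univ : ∀ (M : Type u) [AddCommGroup M] (b : Q → P → M),
      (∀ q q' p, b (q + q') p = b q p + b q' p) →
      (∀ q p p', b q (p + p') = b q p + b q p') →
      (∀ (i : I) q p, b (op i • q) p = b q (i • p)) →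
      ∃! φ : T' →+ M, ∀ q p, φ (t' q p) = b q p)
    -- `α` and `β`, as bimodule homomorphisms
    (α : T →+ I) (β : T' →+ J)
    (hαl : ∀ (i : I) p q, α (t (i • p) q) = i * α (t p q))
    (hαr : ∀ (i : I) p q, α (t p (op i • q)) = α (t p q) * i)
    (hβl : ∀ (j : J) q p, β (t' (j • q) p) = j * β (t' q p))
    (hβr : ∀ (j : J) q p, β (t' q (op j • p)) = β (t' q p) * j)
    -- the associativity conditions of pre-equivalence data
    (hassoc₁ : ∀ p q p', α (t p q) • p' = op (β (t' q p')) • p)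
    (hassoc₂ : ∀ q p q', β (t' q p) • q' = op (α (t p q')) • q) :
    (Function.Surjective α → Function.Bijective α) ∧
    (Function.Surjective β → Function.Bijective β) := by
  classical
  -- extensionality for maps out of T
  have extT : ∀ (M : Type u) [AddCommGroup M] (φ ψ : T →+ M),
      (∀ p q, φ (t p q) = ψ (t p q)) → φ = ψ := by
    intro M _ φ ψ h
    obtain ⟨χ, -, huniq⟩ := tuniv M (fun p q => ψ (t p q))
      (fun p p' q => by beta_reduce; rw [tadd₁, map_add])
      (fun p q q' => by beta_reduce; rw [tadd₂, map_add])
      (fun j p q => by beta_reduce; rw [tbal])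
    rw [huniq φ h, huniq ψ fun _ _ => rfl]
  have extT' : ∀ (M : Type u) [AddCommGroup M] (φ ψ : T' →+ M),
      (∀ q p, φ (t' q p) = ψ (t' q p)) → φ = ψ := by
    intro M _ φ ψ h
    obtain ⟨χ, -, huniq⟩ := t'univ M (fun q p => ψ (t' q p))
      (fun q q' p => by beta_reduce; rw [t'add₁, map_add])
      (fun q p p' => by beta_reduce; rw [t'add₂, map_add])
      (fun i q p => by beta_reduce; rw [t'bal])
    rw [huniq φ h, huniq ψ fun _ _ => rfl]
  -- zero lemmas
  have t0 : ∀ q, t (0 : P) q = 0 := by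
    intro q
    have h := (tadd₁ 0 0 q).symm
    rw [add_zero] at h
    exact add_eq_left.mp h
  have t'0 : ∀ p, t' (0 : Q) p = 0 := by
    intro p
    have h := (t'add₁ 0 0 p).symm
    rw [add_zero] at h
    exact add_eq_left.mp h
  -- left and right "scalar" actions on T
  have hLex : ∀ i : I, ∃! φ : T →+ T, ∀ p q, φ (t p q) = t (i • p) q := fun i =>
    tuniv T (fun p q => t (i • p) q)
      (fun p p' q => by beta_reduce; rw [smul_add, tadd₁])
      (fun p q q' => by beta_reduce; rw [tadd₂])
      (fun j p q => by beta_reduce; rw [smul_comm, tbal])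
  choose L hL _ using hLex
  have hRex : ∀ i : I, ∃! φ : T →+ T, ∀ p q, φ (t p q) = t p (op i • q) := fun i =>
    tuniv T (fun p q => t p (op i • q))
      (fun p p' q => by beta_reduce; rw [tadd₁])
      (fun p q q' => by beta_reduce; rw [smul_add, tadd₂])
      (fun j p q => by beta_reduce; rw [tbal, smul_comm])
  choose R hR _ using hRex
  have hLadd : ∀ i i' : I, L (i + i') = L i + L i' := fun i i' =>
    extT T _ _ fun p q => by
      simp [hL, add_smul, tadd₁]
  have hRadd : ∀ i i' : I, R (i + i') = R i + R i' := fun i i' =>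
    extT T _ _ fun p q => by
      simp [hR, op_add, add_smul, tadd₂]
  have hL1 : L 1 = AddMonoidHom.id T := extT T _ _ fun p q => by
    simp [hL]
  have hR1 : R 1 = AddMonoidHom.id T := extT T _ _ fun p q => by
    simp [hR]
  have hL0 : L 0 = 0 := extT T _ _ fun p q => by
    simp [hL, t0]
  -- key identity on pure tensors
  have key1 : ∀ p' q' (x : T), R (α (t p' q')) x = L (α x) (t p' q') := by
    intro p' q'
    have hadd : ∀ x y : T, L (α (x + y)) (t p' q') =
        L (α x) (t p' q') + L (α y) (t p' q') := by
      intro x y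
      rw [map_add, hLadd]; rfl
    have := extT T (R (α (t p' q'))) (AddMonoidHom.mk' (fun x => L (α x) (t p' q')) hadd)
      (fun p q => by
        show R (α (t p' q')) (t p q) = L (α (t p q)) (t p' q')
        rw [hR, ← hassoc₂ q p' q', ← tbal, ← hassoc₁ p q p', hL])
    intro x
    exact DFunLike.congr_fun this x
  -- key identity in general
  have key : ∀ x y : T, R (α y) x = L (α x) y := by
    intro x y
    have hadd : ∀ y z : T, R (α (y + z)) x = R (α y) x + R (α z) x := by
      intro y z
      rw [map_add, hRadd]; rfl
    have := extT T (AddMonoidHom.mk' (fun y => R (α y) x) hadd) (L (α x))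
      (fun p' q' => key1 p' q' x)
    exact DFunLike.congr_fun this y
  -- same for β
  have hL'ex : ∀ j : J, ∃! φ : T' →+ T', ∀ q p, φ (t' q p) = t' (j • q) p := fun j =>
    t'univ T' (fun q p => t' (j • q) p)
      (fun q q' p => by beta_reduce; rw [smul_add, t'add₁])
      (fun q p p' => by beta_reduce; rw [t'add₂])
      (fun i q p => by beta_reduce; rw [smul_comm, t'bal])
  choose L' hL' _ using hL'ex
  have hR'ex : ∀ j : J, ∃! φ : T' →+ T', ∀ q p, φ (t' q p) = t' q (op j • p) := fun j =>
    t'univ T' (fun q p => t' q (op j • p))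
      (fun q q' p => by beta_reduce; rw [t'add₁])
      (fun q p p' => by beta_reduce; rw [smul_add, t'add₂])
      (fun i q p => by beta_reduce; rw [t'bal, smul_comm])
  choose R' hR' _ using hR'ex
  have hL'add : ∀ j j' : J, L' (j + j') = L' j + L' j' := fun j j' =>
    extT' T' _ _ fun q p => by
      simp [hL', add_smul, t'add₁]
  have hR'add : ∀ j j' : J, R' (j + j') = R' j + R' j' := fun j j' =>
    extT' T' _ _ fun q p => by
      simp [hR', op_add, add_smul, t'add₂]
  have hR'1 : R' 1 = AddMonoidHom.id T' := extT' T' _ _ fun q p => by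
    simp [hR']
  have hL'0 : L' 0 = 0 := extT' T' _ _ fun q p => by
    simp [hL', t'0]
  have key1' : ∀ q' p' (x : T'), R' (β (t' q' p')) x = L' (β x) (t' q' p') := by
    intro q' p'
    have hadd : ∀ x y : T', L' (β (x + y)) (t' q' p') =
        L' (β x) (t' q' p') + L' (β y) (t' q' p') := by
      intro x y
      rw [map_add, hL'add]; rfl
    have := extT' T' (R' (β (t' q' p'))) (AddMonoidHom.mk' (fun x => L' (β x) (t' q' p')) hadd)
      (fun q p => by
        show R' (β (t' q' p')) (t' q p) = L' (β (t' q p)) (t' q' p')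
        rw [hR', ← hassoc₁ p q' p', ← t'bal, ← hassoc₂ q p q', hL'])
    intro x
    exact DFunLike.congr_fun this x
  have key' : ∀ x y : T', R' (β y) x = L' (β x) y := by
    intro x y
    have hadd : ∀ y z : T', R' (β (y + z)) x = R' (β y) x + R' (β z) x := by
      intro y z
      rw [map_add, hR'add]; rfl
    have := extT' T' (AddMonoidHom.mk' (fun y => R' (β y) x) hadd) (L' (β x))
      (fun q' p' => key1' q' p' x)
    exact DFunLike.congr_fun this y
  constructor
  · intro hsurj
    refine ⟨?_, hsurj⟩
    obtain ⟨u, hu⟩ := hsurj 1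
    rw [injective_iff_map_eq_zero]
    intro x hx
    have h1 : x = R (α u) x := by rw [hu, hR1]; rfl
    rw [h1, key, hx, hL0]; rfl
  · intro hsurj
    refine ⟨?_, hsurj⟩
    obtain ⟨u, hu⟩ := hsurj 1
    rw [injective_iff_map_eq_zero]
    intro x hx
    have h1 : x = R' (β u) x := by rw [hu, hR'1]; rfl
    rw [h1, key', hx, hL'0]; rfl
end

section
/- A groupoid-graded ring S is epsilon-strongly graded if and only if for each morphism g of G there exists an element ε_g ∈ S_g S_{g^{-1}} such that ε_g s = s = s ε_{g^{-1}} for all s ∈ S_g. -/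
/- Setup: a ring `S` graded by a small groupoid.  The groupoid is given by a
`CategoryTheory.Groupoid` structure on a type `Obj` of objects.  Composition
convention: for `g : X ⟶ Y` and `h : Y ⟶ Z`, `g ≫ h : X ⟶ Z`; the grading
satisfies `S_g · S_h ⊆ S_{g ≫ h}` for composable morphisms and
`S_g · S_h = 0` otherwise, and `S = ⊕_{g} S_g` (an internal direct sum over
the type of all morphisms). -/

open CategoryTheory DirectSum

/-- The type of all morphisms of the groupoid. -/
abbrev MorTot (Obj : Type u) [Groupoid.{v} Obj] : Type (max u v) := Σ X Y : Obj, X ⟶ Y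

/-- Product of two additive subgroups of a ring: the additive span of the set of
pairwise products. -/
def aMul {S : Type w} [Ring S] (A B : AddSubgroup S) : AddSubgroup S :=
  AddSubgroup.closure {x : S | ∃ a ∈ A, ∃ b ∈ B, x = a * b}

/-- A grading of the ring `S` by the groupoid with objects `Obj`. -/
structure GroupoidGrading (Obj : Type u) [Groupoid.{v} Obj] [DecidableEq (MorTot Obj)]
    (S : Type w) [Ring S] where
  comp : ∀ ⦃X Y : Obj⦄, (X ⟶ Y) → AddSubgroup S
  internal : DirectSum.IsInternal (fun g : MorTot Obj => comp g.2.2)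
  mul_mem : ∀ ⦃X Y Z : Obj⦄ (g : X ⟶ Y) (h : Y ⟶ Z) ⦃a b : S⦄,
    a ∈ comp g → b ∈ comp h → a * b ∈ comp (g ≫ h)
  mul_eq_zero : ∀ ⦃X Y Z W : Obj⦄ (g : X ⟶ Y) (h : Z ⟶ W), Y ≠ Z →
    ∀ ⦃a b : S⦄, a ∈ comp g → b ∈ comp h → a * b = 0

variable {Obj : Type u} [Groupoid.{v} Obj] [DecidableEq (MorTot Obj)]
  {S : Type w} [Ring S]

/-- The component `(1_S)_e ∈ S_e` of `1` at the identity morphism of `X`. -/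
noncomputable def GroupoidGrading.oneComponent (hS : GroupoidGrading Obj S) (X : Obj) : S :=
  ((Equiv.ofBijective _ hS.internal).symm (1 : S) ⟨X, X, 𝟙 X⟩ : hS.comp (𝟙 X))

/-- `I` is a unital ideal of the (sub)ring `C`. -/
def IsUnitalIdealOf {S : Type w} [Ring S] (I C : AddSubgroup S) : Prop :=
  I ≤ C ∧ (∀ a ∈ C, ∀ x ∈ I, a * x ∈ I ∧ x * a ∈ I) ∧
    ∃ e ∈ I, ∀ x ∈ I, e * x = x ∧ x * e = x

/-- `S` is epsilon-strongly graded: each `S_g S_{g⁻¹}` is a unital ideal of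
`S_{c(g)}` and `S_g S_h = (S_g S_{g⁻¹}) S_{gh} = S_{gh} (S_{h⁻¹} S_h)` for all
composable pairs. -/
def GroupoidGrading.EpsilonStrong {Obj : Type u} [Groupoid.{v} Obj]
    [DecidableEq (MorTot Obj)] {S : Type w} [Ring S]
    (hS : GroupoidGrading Obj S) : Prop :=
  (∀ ⦃X Y : Obj⦄ (g : X ⟶ Y),
     IsUnitalIdealOf (aMul (hS.comp g) (hS.comp (Groupoid.inv g))) (hS.comp (𝟙 X))) ∧
  (∀ ⦃X Y Z : Obj⦄ (g : X ⟶ Y) (h : Y ⟶ Z),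
     aMul (hS.comp g) (hS.comp h)
       = aMul (aMul (hS.comp g) (hS.comp (Groupoid.inv g))) (hS.comp (g ≫ h)) ∧
     aMul (hS.comp g) (hS.comp h)
       = aMul (hS.comp (g ≫ h)) (aMul (hS.comp (Groupoid.inv h)) (hS.comp h)))

/-! Inserting the local units `ε_g` proves every inclusion of the epsilon-strong conditions
(`ab = ε_g ab` for `a ∈ S_g`); the reverse inclusions are degree bookkeeping. Conversely, the
identity components of `1` are local units, so for `g : X ⟶ Y`
`S_g = S_g S_{𝟙 Y} = (S_g S_{g⁻¹}) S_g`, on which the unit of the ideal `S_g S_{g⁻¹}` acts as a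
left identity; symmetrically on the right. -/

section aMul

variable {A A' B B' C : AddSubgroup S}

lemma mul_mem_aMul {a b : S} (ha : a ∈ A) (hb : b ∈ B) : a * b ∈ aMul A B :=
  AddSubgroup.subset_closure ⟨a, ha, b, hb, rfl⟩

lemma aMul_le (h : ∀ a ∈ A, ∀ b ∈ B, a * b ∈ C) : aMul A B ≤ C := by
  rw [aMul, AddSubgroup.closure_le]
  rintro x ⟨a, ha, b, hb, rfl⟩
  exact h a ha b hb

lemma mul_left_mem_aMul {a x : S} (hA : ∀ p ∈ A, a * p ∈ A') (hx : x ∈ aMul A B) :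
    a * x ∈ aMul A' B :=
  aMul_le (C := (aMul A' B).comap (AddMonoidHom.mulLeft a))
    (fun p hp q hq => by simpa [mul_assoc] using mul_mem_aMul (hA p hp) hq) hx

lemma mul_right_mem_aMul {b x : S} (hB : ∀ q ∈ B, q * b ∈ B') (hx : x ∈ aMul A B) :
    x * b ∈ aMul A B' :=
  aMul_le (C := (aMul A B').comap (AddMonoidHom.mulRight b))
    (fun p hp q hq => by simpa [mul_assoc] using mul_mem_aMul hp (hB q hq)) hx

lemma unit_mul_eq_of_mem_aMul {e x : S} (he : ∀ a ∈ A, e * a = a) (hx : x ∈ aMul A B) :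
    e * x = x := by
  induction hx using AddSubgroup.closure_induction with
  | mem x hx =>
    obtain ⟨a, ha, b, -, rfl⟩ := hx
    rw [← mul_assoc, he a ha]
  | zero => exact mul_zero e
  | add x y _ _ hx hy => rw [mul_add, hx, hy]
  | neg x _ hx => rw [mul_neg, hx]

lemma mul_unit_eq_of_mem_aMul {e x : S} (he : ∀ b ∈ B, b * e = b) (hx : x ∈ aMul A B) :
    x * e = x := by
  induction hx using AddSubgroup.closure_induction with
  | mem x hx =>
    obtain ⟨a, -, b, hb, rfl⟩ := hx
    rw [mul_assoc, he b hb]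
  | zero => exact zero_mul e
  | add x y _ _ hx hy => rw [add_mul, hx, hy]
  | neg x _ hx => rw [neg_mul, hx]

end aMul

theorem DirectSum.eq_of_sum_eq_of_decompose_eq_zero {ι σ M κ : Type*} [DecidableEq ι]
    [AddCommMonoid M] [SetLike σ M] [AddSubmonoidClass σ M] (ℳ : ι → σ) [Decomposition ℳ]
    {i : ι} {x : M} (hx : x ∈ ℳ i) {F : Finset κ} {t : κ → M} (hsum : ∑ k ∈ F, t k = x)
    {k₀ : κ} (ht₀ : t k₀ ∈ ℳ i) (hF : k₀ ∉ F → t k₀ = 0)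
    (ht : ∀ k ≠ k₀, (decompose ℳ (t k) i : M) = 0) : t k₀ = x :=
  calc t k₀ = decompose ℳ (t k₀) i := (decompose_of_mem_same ℳ ht₀).symm
    _ = ∑ k ∈ F, (decompose ℳ (t k) i : M) :=
      (Finset.sum_eq_single k₀ (fun k _ hk => ht k hk)
        (fun hk => by rw [hF hk, decompose_zero]; rfl)).symm
    _ = x := by rw [← decompose_of_mem_same ℳ hx, ← hsum]; simp

lemma MorTot.eq_id_of_precomp_eq {C : Type*} [Groupoid C] {X Y Q : C} {g : X ⟶ Y}
    {f : Y ⟶ Q} (h : (⟨X, Q, g ≫ f⟩ : MorTot C) = ⟨X, Y, g⟩) :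
    (⟨Y, Q, f⟩ : MorTot C) = ⟨Y, Y, 𝟙 Y⟩ := by
  obtain ⟨rfl, h⟩ := Sigma.mk.inj_iff.mp (eq_of_heq (Sigma.mk.inj_iff.mp h).2)
  rw [(cancel_epi g).mp ((eq_of_heq h).trans (Category.comp_id g).symm)]

lemma MorTot.eq_id_of_postcomp_eq {C : Type*} [Groupoid C] {X Y P : C} {g : X ⟶ Y}
    {f : P ⟶ X} (h : (⟨P, Y, f ≫ g⟩ : MorTot C) = ⟨X, Y, g⟩) :
    (⟨P, X, f⟩ : MorTot C) = ⟨X, X, 𝟙 X⟩ := by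
  obtain ⟨rfl, h⟩ := Sigma.mk.inj_iff.mp h
  obtain ⟨-, h⟩ := Sigma.mk.inj_iff.mp (eq_of_heq h)
  rw [(cancel_mono g).mp ((eq_of_heq h).trans (Category.id_comp g).symm)]

namespace GroupoidGrading

variable (hS : GroupoidGrading Obj S)

section Decomposition

variable [Decomposition fun k : MorTot Obj => hS.comp k.2.2]

lemma decompose_mul_eq_zero_of_ne_id_right {X Y P Q : Obj} {g : X ⟶ Y} {f : P ⟶ Q}
    {s t : S} (hs : s ∈ hS.comp g) (ht : t ∈ hS.comp f)
    (hf : (⟨P, Q, f⟩ : MorTot Obj) ≠ ⟨Y, Y, 𝟙 Y⟩) :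
    (decompose (fun k : MorTot Obj => hS.comp k.2.2) (s * t) ⟨X, Y, g⟩ : S) = 0 := by
  by_cases hP : Y = P
  · subst hP
    exact decompose_of_mem_ne _ (hS.mul_mem g f hs ht) (hf ∘ MorTot.eq_id_of_precomp_eq)
  · rw [hS.mul_eq_zero g f hP hs ht, decompose_zero]
    rfl

lemma decompose_mul_eq_zero_of_ne_id_left {X Y P Q : Obj} {g : X ⟶ Y} {f : P ⟶ Q}
    {s t : S} (hs : s ∈ hS.comp g) (ht : t ∈ hS.comp f)
    (hf : (⟨P, Q, f⟩ : MorTot Obj) ≠ ⟨X, X, 𝟙 X⟩) :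
    (decompose (fun k : MorTot Obj => hS.comp k.2.2) (t * s) ⟨X, Y, g⟩ : S) = 0 := by
  by_cases hQ : Q = X
  · subst hQ
    exact decompose_of_mem_ne _ (hS.mul_mem f g ht hs) (hf ∘ MorTot.eq_id_of_postcomp_eq)
  · rw [hS.mul_eq_zero f g hQ ht hs, decompose_zero]
    rfl

end Decomposition

lemma oneComponent_mem (X : Obj) : hS.oneComponent X ∈ hS.comp (𝟙 X) :=
  SetLike.coe_mem _

/- Expand `s = s * 1` along the homogeneous components `u k` of `1`: the term `s * u k` has
degree `g ≫ k` (or vanishes), which equals `g` only for `k = 𝟙 Y`. -/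
lemma mul_oneComponent {X Y : Obj} {g : X ⟶ Y} {s : S} (hs : s ∈ hS.comp g) :
    s * hS.oneComponent Y = s := by
  classical
  let _ := hS.internal.chooseDecomposition
  set u := decompose (fun k : MorTot Obj => hS.comp k.2.2) (1 : S)
  refine eq_of_sum_eq_of_decompose_eq_zero (fun k : MorTot Obj => hS.comp k.2.2) (i := ⟨X, Y, g⟩)
    hs (F := u.support) (t := fun k => s * u k)
    ?_ (by simpa using hS.mul_mem g (𝟙 Y) hs (u ⟨Y, Y, 𝟙 Y⟩).2) (fun hk => ?_)
    (fun ⟨_, _, _⟩ hk => hS.decompose_mul_eq_zero_of_ne_id_right hs (u _).2 hk)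
  · rw [← Finset.mul_sum, sum_support_decompose, mul_one]
  · rw [DFinsupp.notMem_support_iff.mp hk, ZeroMemClass.coe_zero, mul_zero]

lemma oneComponent_mul {X Y : Obj} {g : X ⟶ Y} {s : S} (hs : s ∈ hS.comp g) :
    hS.oneComponent X * s = s := by
  classical
  let _ := hS.internal.chooseDecomposition
  set u := decompose (fun k : MorTot Obj => hS.comp k.2.2) (1 : S)
  refine eq_of_sum_eq_of_decompose_eq_zero (fun k : MorTot Obj => hS.comp k.2.2) (i := ⟨X, Y, g⟩)
    hs (F := u.support) (t := fun k => u k * s)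
    ?_ (by simpa using hS.mul_mem (𝟙 X) g (u ⟨X, X, 𝟙 X⟩).2 hs) (fun hk => ?_)
    (fun ⟨_, _, _⟩ hk => hS.decompose_mul_eq_zero_of_ne_id_left hs (u _).2 hk)
  · rw [← Finset.sum_mul, sum_support_decompose, one_mul]
  · rw [DFinsupp.notMem_support_iff.mp hk, ZeroMemClass.coe_zero, zero_mul]

lemma mem_aMul_comp_id {X Y : Obj} {g : X ⟶ Y} {s : S} (hs : s ∈ hS.comp g) :
    s ∈ aMul (hS.comp g) (hS.comp (𝟙 Y)) := by
  simpa only [hS.mul_oneComponent hs] using mul_mem_aMul hs (hS.oneComponent_mem Y)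

lemma mem_aMul_id_comp {X Y : Obj} {g : X ⟶ Y} {s : S} (hs : s ∈ hS.comp g) :
    s ∈ aMul (hS.comp (𝟙 X)) (hS.comp g) := by
  simpa only [hS.oneComponent_mul hs] using mul_mem_aMul (hS.oneComponent_mem X) hs

variable {hS}

lemma EpsilonStrong.unit_mul_eq (h : hS.EpsilonStrong) {X Y : Obj} {g : X ⟶ Y} {e s : S}
    (he : ∀ x ∈ aMul (hS.comp g) (hS.comp (Groupoid.inv g)), e * x = x)
    (hs : s ∈ hS.comp g) : e * s = s := by
  have hs' := hS.mem_aMul_comp_id hs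
  rw [(h.2 g (𝟙 Y)).1, Category.comp_id] at hs'
  exact unit_mul_eq_of_mem_aMul he hs'

lemma EpsilonStrong.mul_unit_eq (h : hS.EpsilonStrong) {X Y : Obj} {g : X ⟶ Y} {e s : S}
    (he : ∀ x ∈ aMul (hS.comp (Groupoid.inv g)) (hS.comp (Groupoid.inv (Groupoid.inv g))),
      x * e = x)
    (hs : s ∈ hS.comp g) : s * e = s := by
  have hs' := hS.mem_aMul_id_comp hs
  rw [(h.2 (𝟙 X) g).2, Category.id_comp] at hs'
  exact mul_unit_eq_of_mem_aMul (by simpa using he) hs'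

variable (hS)

lemma isUnitalIdealOf_aMul_comp_inv {X Y : Obj} (g : X ⟶ Y) {e : S}
    (he : e ∈ aMul (hS.comp g) (hS.comp (Groupoid.inv g)))
    (hl : ∀ s ∈ hS.comp g, e * s = s) (hr : ∀ t ∈ hS.comp (Groupoid.inv g), t * e = t) :
    IsUnitalIdealOf (aMul (hS.comp g) (hS.comp (Groupoid.inv g))) (hS.comp (𝟙 X)) :=
  ⟨aMul_le fun a ha b hb => by simpa using hS.mul_mem g _ ha hb,
    fun a ha x hx =>
      ⟨mul_left_mem_aMul (fun p hp => by simpa using hS.mul_mem (𝟙 X) g ha hp) hx,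
        mul_right_mem_aMul (fun q hq => by simpa using hS.mul_mem _ (𝟙 X) hq ha) hx⟩,
    e, he, fun _ hx => ⟨unit_mul_eq_of_mem_aMul hl hx, mul_unit_eq_of_mem_aMul hr hx⟩⟩

lemma aMul_comp_eq_aMul_aMul_comp {X Y Z : Obj} (g : X ⟶ Y) (h : Y ⟶ Z) {e : S}
    (he : e ∈ aMul (hS.comp g) (hS.comp (Groupoid.inv g))) (hl : ∀ s ∈ hS.comp g, e * s = s) :
    aMul (hS.comp g) (hS.comp h)
      = aMul (aMul (hS.comp g) (hS.comp (Groupoid.inv g))) (hS.comp (g ≫ h)) := by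
  refine le_antisymm (aMul_le fun a ha b hb => ?_) (aMul_le fun x hx c hc => ?_)
  · rw [← hl a ha, mul_assoc]
    exact mul_mem_aMul he (hS.mul_mem g h ha hb)
  · exact mul_right_mem_aMul (fun q hq => by simpa using hS.mul_mem _ (g ≫ h) hq hc) hx

lemma aMul_comp_eq_aMul_comp_aMul {X Y Z : Obj} (g : X ⟶ Y) (h : Y ⟶ Z) {e : S}
    (he : e ∈ aMul (hS.comp (Groupoid.inv h)) (hS.comp h)) (hr : ∀ s ∈ hS.comp h, s * e = s) :
    aMul (hS.comp g) (hS.comp h)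
      = aMul (hS.comp (g ≫ h)) (aMul (hS.comp (Groupoid.inv h)) (hS.comp h)) := by
  refine le_antisymm (aMul_le fun a ha b hb => ?_) (aMul_le fun c hc x hx => ?_)
  · rw [← hr b hb, ← mul_assoc]
    exact mul_mem_aMul (hS.mul_mem g h ha hb) he
  · exact mul_left_mem_aMul (fun p hp => by simpa using hS.mul_mem (g ≫ h) _ hc hp) hx

end GroupoidGrading

/-- A groupoid-graded ring `S` is epsilon-strongly graded if and
only if for each morphism `g` there is `ε_g ∈ S_g S_{g⁻¹}` with
`ε_g s = s = s ε_{g⁻¹}` for all `s ∈ S_g`. -/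
theorem epsilonStrong_iff (hS : GroupoidGrading Obj S) :
    hS.EpsilonStrong ↔
    ∃ ε : ∀ (X Y : Obj), (X ⟶ Y) → S,
      ∀ (X Y : Obj) (g : X ⟶ Y),
        ε X Y g ∈ aMul (hS.comp g) (hS.comp (Groupoid.inv g)) ∧
        ∀ s ∈ hS.comp g, ε X Y g * s = s ∧ s * ε Y X (Groupoid.inv g) = s := by
  constructor
  · intro h
    choose e he hunit using fun (X Y : Obj) (g : X ⟶ Y) => (h.1 g).2.2
    exact ⟨e, fun X Y g => ⟨he X Y g, fun s hs =>
      ⟨h.unit_mul_eq (fun x hx => (hunit X Y g x hx).1) hs,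
        h.mul_unit_eq (fun x hx => (hunit Y X _ x hx).2) hs⟩⟩⟩
  · rintro ⟨ε, hε⟩
    have hε_inv_mem : ∀ (X Y : Obj) (g : X ⟶ Y),
        ε Y X (Groupoid.inv g) ∈ aMul (hS.comp (Groupoid.inv g)) (hS.comp g) :=
      fun X Y g => by simpa using (hε Y X (Groupoid.inv g)).1
    have hε_inv_unit : ∀ (X Y : Obj) (g : X ⟶ Y), ∀ t ∈ hS.comp (Groupoid.inv g),
        t * ε X Y g = t :=
      fun X Y g t ht => by simpa using ((hε Y X (Groupoid.inv g)).2 t ht).2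
    exact ⟨fun X Y g => hS.isUnitalIdealOf_aMul_comp_inv g (hε X Y g).1
        (fun s hs => ((hε X Y g).2 s hs).1) (hε_inv_unit X Y g),
      fun X Y Z g h =>
        ⟨hS.aMul_comp_eq_aMul_aMul_comp g h (hε X Y g).1 (fun s hs => ((hε X Y g).2 s hs).1),
          hS.aMul_comp_eq_aMul_comp_aMul g h (hε_inv_mem Y Z h)
            (fun s hs => ((hε Y Z h).2 s hs).2)⟩⟩
end

section
/- If S is epsilon-strongly graded by a groupoid G, then each idempotent ε_g = 1_{S_g S_{g^{-1}}} is central in R = ⊕_{e ∈ G_0} S_e, and S_g S_{g^{-1}} = ε_g R. -/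
/- Setup: a ring `S` graded by a small groupoid.  The groupoid is given by a
`CategoryTheory.Groupoid` structure on a type `Obj` of objects.  Composition
convention: for `g : X ⟶ Y` and `h : Y ⟶ Z`, `g ≫ h : X ⟶ Z`; the grading
satisfies `S_g · S_h ⊆ S_{g ≫ h}` for composable morphisms and
`S_g · S_h = 0` otherwise, and `S = ⊕_{g} S_g` (an internal direct sum over
the type of all morphisms). -/

open CategoryTheory DirectSum

variable {Obj : Type u} [Groupoid.{v} Obj] [DecidableEq (MorTot Obj)]
  {S : Type w} [Ring S]

/-- If `S` is epsilon-strongly graded by a groupoid, then each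
`ε_g = 1_{S_g S_{g⁻¹}}` is central in `R = ⊕_{e ∈ G₀} S_e`, and
`S_g S_{g⁻¹} = ε_g R`. -/
theorem epsilon_central_and_generates (hS : GroupoidGrading Obj S)
    (hstr : hS.EpsilonStrong) {X Y : Obj} (g : X ⟶ Y) (e : S)
    (he : e ∈ aMul (hS.comp g) (hS.comp (Groupoid.inv g)))
    (hid : ∀ x ∈ aMul (hS.comp g) (hS.comp (Groupoid.inv g)), e * x = x ∧ x * e = x) :
    (∀ r ∈ ⨆ Z : Obj, hS.comp (𝟙 Z), e * r = r * e) ∧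
    ((aMul (hS.comp g) (hS.comp (Groupoid.inv g)) : Set S)
      = (fun r => e * r) '' ↑(⨆ Z : Obj, hS.comp (𝟙 Z))) := by
    classical
  set I := aMul (hS.comp g) (hS.comp (Groupoid.inv g)) with hI
  obtain ⟨hle, hideal, -⟩ := hstr.1 g
  have heX : e ∈ hS.comp (𝟙 X) := hle he
  -- key: for any r in the sup, e * r ∈ I and e * r = r * e
  have key : ∀ r ∈ ⨆ Z : Obj, hS.comp (𝟙 Z), e * r ∈ I ∧ e * r = r * e := by
    intro r hr
    refine AddSubgroup.iSup_induction (C := fun r => e * r ∈ I ∧ e * r = r * e)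
      (fun Z : Obj => hS.comp (𝟙 Z)) hr ?_ ?_ ?_
    · intro Z x hx
      by_cases hZ : Z = X
      · subst hZ
        have h1 : e * x ∈ I := (hideal x hx e he).2
        have h2 : x * e ∈ I := (hideal x hx e he).1
        refine ⟨h1, ?_⟩
        have := (hid _ h1).2  -- (e*x)*e = e*x
        have h3 := (hid _ h2).1  -- e*(x*e) = x*e
        calc e * x = e * x * e := this.symm
          _ = e * (x * e) := by rw [mul_assoc]
          _ = x * e := h3
      · have h1 : e * x = 0 := hS.mul_eq_zero (𝟙 X) (𝟙 Z) (fun h => hZ h.symm) heX hx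
        have h2 : x * e = 0 := hS.mul_eq_zero (𝟙 Z) (𝟙 X) hZ hx heX
        exact ⟨h1 ▸ zero_mem I, by rw [h1, h2]⟩
    · exact ⟨by simpa using zero_mem I, by simp⟩
    · rintro x y ⟨hx1, hx2⟩ ⟨hy1, hy2⟩
      refine ⟨?_, ?_⟩
      · rw [mul_add]; exact add_mem hx1 hy1
      · rw [mul_add, add_mul, hx2, hy2]
  constructor
  · exact fun r hr => (key r hr).2
  · ext x
    constructor
    · intro hx
      exact ⟨x, AddSubgroup.mem_iSup_of_mem X (hle hx), (hid x hx).1⟩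
    · rintro ⟨r, hr, rfl⟩
      exact (key r hr).1
end

section
/- Let S be epsilon-strongly graded by a small groupoid G, with ε_g the identity of S_g S_{g^{-1}}. Then for every composable pair (g,h), the multiplication map m_{g,h} : S_g ⊗_{S_{d(g)}} S_h → ε_g S_{gh} is bijective (an isomorphism of additive groups and of bimodules). -/
/- Setup: a ring `S` graded by a small groupoid.  The groupoid is given by a
`CategoryTheory.Groupoid` structure on a type `Obj` of objects.  Composition
convention: for `g : X ⟶ Y` and `h : Y ⟶ Z`, `g ≫ h : X ⟶ Z`; the grading
satisfies `S_g · S_h ⊆ S_{g ≫ h}` for composable morphisms and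
`S_g · S_h = 0` otherwise, and `S = ⊕_{g} S_g` (an internal direct sum over
the type of all morphisms). -/

open CategoryTheory DirectSum

variable {Obj : Type u} [Groupoid.{v} Obj] [DecidableEq (MorTot Obj)]
  {S : Type w} [Ring S]

/-! Write `ε_g = ∑ aᵢ bᵢ` with `aᵢ ∈ S_g`, `bᵢ ∈ S_{g⁻¹}`. The map `y ↦ ∑ aᵢ ⊗ bᵢ y` on `S_{gh}` is
inverse to the multiplication map: `m` sends it to `ε_g y`, and by balancedness it sends `a x` to
`∑ aᵢ bᵢ a ⊗ x = ε_g a ⊗ x = a ⊗ x`. The last step holds because `ε_g` fixes every `S_g S_k`,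
which by ε-strongness equals `(S_g S_{g⁻¹}) S_{gk}`, and `S_g` is covered by these since
`a = ∑ₖ a 1_k`. -/

lemma aMul_le_iff {A B C : AddSubgroup S} :
    aMul A B ≤ C ↔ ∀ a ∈ A, ∀ b ∈ B, a * b ∈ C := by
  refine (AddSubgroup.closure_le C).trans ⟨fun hC a ha b hb => hC ⟨a, ha, b, hb, rfl⟩, ?_⟩
  rintro hC _ ⟨a, ha, b, hb, rfl⟩
  exact hC a ha b hb

lemma mul_eq_self_of_mem_aMul {e : S} {A B : AddSubgroup S} (he : ∀ a ∈ A, e * a = a)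
    {x : S} (hx : x ∈ aMul A B) : e * x = x := by
  have hle : aMul A B ≤ (AddMonoidHom.mulLeft e).eqLocus (AddMonoidHom.id S) :=
    aMul_le_iff.2 fun a ha b _ => show e * (a * b) = a * b by rw [← mul_assoc, he a ha]
  exact hle hx

namespace GroupoidGrading

variable (hS : GroupoidGrading Obj S) {X Y Z : Obj}

lemma mul_mem_of_comp_eq {g : X ⟶ Y} {h : Y ⟶ Z} {k : X ⟶ Z} (hk : g ≫ h = k) {a b : S}
    (ha : a ∈ hS.comp g) (hb : b ∈ hS.comp h) : a * b ∈ hS.comp k :=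
  hk ▸ hS.mul_mem g h ha hb

lemma aMul_le_comp (g : X ⟶ Y) (h : Y ⟶ Z) :
    aMul (hS.comp g) (hS.comp h) ≤ hS.comp (g ≫ h) :=
  aMul_le_iff.2 fun _ ha _ hb => hS.mul_mem g h ha hb

/-- Split `a = a * 1` along the homogeneous components `1_k` of `1`: each `a * 1_k` either
vanishes or lies in some `S_g S_k`. -/
lemma mul_eq_self_of_forall_aMul (g : X ⟶ Y) {e : S}
    (he : ∀ ⦃Z : Obj⦄ (k : Y ⟶ Z), ∀ x ∈ aMul (hS.comp g) (hS.comp k), e * x = x)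
    {a : S} (ha : a ∈ hS.comp g) : e * a = a := by
  obtain ⟨u, hu⟩ := hS.internal.2 1
  suffices ∀ v, e * (a * DirectSum.coeAddMonoidHom (fun k : MorTot Obj => hS.comp k.2.2) v)
      = a * DirectSum.coeAddMonoidHom (fun k : MorTot Obj => hS.comp k.2.2) v by
    simpa [hu] using this u
  intro v
  induction v using DirectSum.induction_on with
  | zero => simp
  | of k s =>
    obtain ⟨Y', Z', k⟩ := k
    rw [DirectSum.coeAddMonoidHom_of]
    by_cases hY : Y = Y'
    · subst hY
      exact he k _ (AddSubgroup.subset_closure ⟨a, ha, s, s.2, rfl⟩)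
    · rw [hS.mul_eq_zero g k hY ha s.2, mul_zero]
  | add v w hv hw => rw [map_add, mul_add, mul_add, hv, hw]

def IsBalanced (g : X ⟶ Y) (h : Y ⟶ Z) {M : Type*} [AddCommGroup M]
    (b : hS.comp g → hS.comp h → M) : Prop :=
  (∀ a a' x, b (a + a') x = b a x + b a' x) ∧ (∀ a x x', b a (x + x') = b a x + b a x') ∧
    ∀ (a : hS.comp g) (x : hS.comp h) (r : S), r ∈ hS.comp (𝟙 Y) →
      ∀ (h₁ : (a : S) * r ∈ hS.comp g) (h₂ : r * (x : S) ∈ hS.comp h),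
        b ⟨(a : S) * r, h₁⟩ x = b a ⟨r * (x : S), h₂⟩

variable {hS} {g : X ⟶ Y} {h : Y ⟶ Z}

lemma EpsilonStrong.mul_eq_self_of_mem_aMul (hstr : hS.EpsilonStrong) {e : S}
    (hid : ∀ x ∈ aMul (hS.comp g) (hS.comp (Groupoid.inv g)), e * x = x)
    (k : Y ⟶ Z) {x : S} (hx : x ∈ aMul (hS.comp g) (hS.comp k)) : e * x = x := by
  rw [(hstr.2 g k).1] at hx
  exact _root_.mul_eq_self_of_mem_aMul hid hx

lemma isBalanced_mul (g : X ⟶ Y) (h : Y ⟶ Z) :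
    hS.IsBalanced g h fun a x => (⟨a * x, hS.mul_mem g h a.2 x.2⟩ : hS.comp (g ≫ h)) :=
  ⟨fun _ _ _ => Subtype.ext (add_mul _ _ _), fun _ _ _ => Subtype.ext (mul_add _ _ _),
    fun _ _ _ _ _ _ => Subtype.ext (mul_assoc _ _ _)⟩

namespace IsBalanced

variable {M N : Type*} [AddCommGroup M] [AddCommGroup N] {b : hS.comp g → hS.comp h → M}

lemma map (hb : hS.IsBalanced g h b) (φ : M →+ N) : hS.IsBalanced g h fun a x => φ (b a x) :=
  ⟨fun a a' x => by simp only [hb.1, map_add], fun a x x' => by simp only [hb.2.1, map_add],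
    fun a x r hr h₁ h₂ => congrArg φ (hb.2.2 a x r hr h₁ h₂)⟩

def addHomLeft (hb : hS.IsBalanced g h b) (x : hS.comp h) : hS.comp g →+ M :=
  AddMonoidHom.mk' (b · x) fun a a' => hb.1 a a' x

def addHomRight (hb : hS.IsBalanced g h b) (a : hS.comp g) : hS.comp h →+ M :=
  AddMonoidHom.mk' (b a) (hb.2.1 a)

end IsBalanced

variable {T : Type w} [AddCommGroup T] {t : hS.comp g → hS.comp h → T}

lemma hom_ext_of_universal
    (tuniv : ∀ (M : Type w) [AddCommGroup M] (b : hS.comp g → hS.comp h → M),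
      hS.IsBalanced g h b → ∃! φ : T →+ M, ∀ a x, φ (t a x) = b a x)
    (ht : hS.IsBalanced g h t) {M : Type w} [AddCommGroup M] {φ ψ : T →+ M}
    (hφψ : ∀ a x, φ (t a x) = ψ (t a x)) : φ = ψ :=
  (tuniv M _ (ht.map ψ)).unique hφψ fun _ _ => rfl

/-- For `r = ∑ aᵢ bᵢ ∈ S_g S_{g⁻¹}`, the map `y ↦ ∑ aᵢ ⊗ bᵢ y` lifts left multiplication by `r`
on `S_{gh}` through the multiplication map `m`. -/
lemma IsBalanced.exists_lift_mulLeft (ht : hS.IsBalanced g h t) (m : T →+ S)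
    (hm : ∀ a x, m (t a x) = (a : S) * (x : S)) {r : S}
    (hr : r ∈ aMul (hS.comp g) (hS.comp (Groupoid.inv g))) :
    ∃ F : hS.comp (g ≫ h) →+ T,
      (∀ (a : hS.comp g) (x : hS.comp h) (a' : hS.comp g), (a' : S) = r * a →
        F ⟨a * x, hS.mul_mem g h a.2 x.2⟩ = t a' x) ∧ ∀ y, m (F y) = r * y := by
  have mul_mem_g : ∀ {r' : S}, r' ∈ aMul (hS.comp g) (hS.comp (Groupoid.inv g)) →
      ∀ a ∈ hS.comp g, r' * a ∈ hS.comp g := fun hr' a ha =>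
    hS.mul_mem_of_comp_eq (Category.id_comp g)
      (by simpa using hS.aMul_le_comp g (Groupoid.inv g) hr') ha
  induction hr using AddSubgroup.closure_induction with
  | mem _ hprod =>
    obtain ⟨c, hc, d, hd, rfl⟩ := hprod
    have hdy : ∀ y : hS.comp (g ≫ h), d * y ∈ hS.comp h := fun y =>
      hS.mul_mem_of_comp_eq (by simp) hd y.2
    refine ⟨(ht.addHomRight ⟨c, hc⟩).comp
      (AddMonoidHom.mk' (fun y => ⟨d * y, hdy y⟩) fun y y' => Subtype.ext (mul_add _ _ _)),
      fun a x a' ha' => ?_, fun y => by simp [IsBalanced.addHomRight, hm, mul_assoc]⟩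
    have hda : d * a ∈ hS.comp (𝟙 Y) :=
      hS.mul_mem_of_comp_eq (Groupoid.inv_comp g) hd a.2
    have hbal := ht.2.2 ⟨c, hc⟩ x (d * a) hda
      (hS.mul_mem_of_comp_eq (Category.comp_id g) hc hda)
      (by rw [mul_assoc]; exact hdy ⟨_, hS.mul_mem g h a.2 x.2⟩)
    simp only [AddMonoidHom.comp_apply, AddMonoidHom.mk'_apply, IsBalanced.addHomRight]
    convert hbal.symm using 2
    · exact Subtype.ext (mul_assoc _ _ _).symm
    · exact Subtype.ext (by rw [ha', mul_assoc])
  | zero =>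
    refine ⟨0, fun a x a' ha' => ?_, fun y => by simp⟩
    rw [show a' = 0 from Subtype.ext (by simp [ha'])]
    exact ((ht.addHomLeft x).map_zero).symm
  | add r₁ r₂ hr₁ hr₂ ih₁ ih₂ =>
    obtain ⟨F₁, hF₁, hmF₁⟩ := ih₁
    obtain ⟨F₂, hF₂, hmF₂⟩ := ih₂
    refine ⟨F₁ + F₂, fun a x a' ha' => ?_, fun y => by simp [hmF₁, hmF₂, add_mul]⟩
    have h₁ := hF₁ a x ⟨r₁ * a, mul_mem_g hr₁ a a.2⟩ rfl
    have h₂ := hF₂ a x ⟨r₂ * a, mul_mem_g hr₂ a a.2⟩ rfl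
    rw [AddMonoidHom.add_apply, h₁, h₂, show a' = ⟨r₁ * a, _⟩ + ⟨r₂ * a, _⟩ from
      Subtype.ext (by simp [ha', add_mul])]
    exact ((ht.addHomLeft x).map_add _ _).symm
  | neg r hr' ih =>
    obtain ⟨F, hF, hmF⟩ := ih
    refine ⟨-F, fun a x a' ha' => ?_, fun y => by simp [hmF]⟩
    rw [AddMonoidHom.neg_apply, hF a x ⟨r * a, mul_mem_g hr' a a.2⟩ rfl,
      show a' = -⟨r * a, _⟩ from Subtype.ext (by simp [ha'])]
    exact ((ht.addHomLeft x).map_neg _).symm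

end GroupoidGrading

/-- The tensor product `S_g ⊗_{S_{𝟙 Y}} S_h` is encoded by its universal property: `t` is the
universal balanced biadditive map into `T`, and `m` is the multiplication map. -/
theorem multiplication_map_bijective (hS : GroupoidGrading Obj S)
    (hstr : hS.EpsilonStrong) {X Y Z : Obj} (g : X ⟶ Y) (h : Y ⟶ Z)
    (e : S) (he : e ∈ aMul (hS.comp g) (hS.comp (Groupoid.inv g)))
    (hid : ∀ x ∈ aMul (hS.comp g) (hS.comp (Groupoid.inv g)), e * x = x ∧ x * e = x)
    (T : Type w) [AddCommGroup T]
    (t : hS.comp g → hS.comp h → T)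
    (tadd₁ : ∀ a a' b, t (a + a') b = t a b + t a' b)
    (tadd₂ : ∀ a b b', t a (b + b') = t a b + t a b')
    (tbal : ∀ (a : hS.comp g) (b : hS.comp h) (r : S), r ∈ hS.comp (𝟙 Y) →
      ∀ (h₁ : (a : S) * r ∈ hS.comp g) (h₂ : r * (b : S) ∈ hS.comp h),
        t ⟨(a : S) * r, h₁⟩ b = t a ⟨r * (b : S), h₂⟩)
    (tuniv : ∀ (M : Type w) [AddCommGroup M] (b : hS.comp g → hS.comp h → M),
      (∀ a a' x, b (a + a') x = b a x + b a' x) →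
      (∀ a x x', b a (x + x') = b a x + b a x') →
      (∀ (a : hS.comp g) (x : hS.comp h) (r : S), r ∈ hS.comp (𝟙 Y) →
        ∀ (h₁ : (a : S) * r ∈ hS.comp g) (h₂ : r * (x : S) ∈ hS.comp h),
          b ⟨(a : S) * r, h₁⟩ x = b a ⟨r * (x : S), h₂⟩) →
      ∃! φ : T →+ M, ∀ a x, φ (t a x) = b a x)
    (m : T →+ S) (hm : ∀ a b, m (t a b) = (a : S) * (b : S)) :
    Function.Injective m ∧
    Set.range m = (fun y => e * y) '' ↑(hS.comp (g ≫ h)) := by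
  have ht : hS.IsBalanced g h t := ⟨tadd₁, tadd₂, tbal⟩
  have univ : ∀ (M : Type w) [AddCommGroup M] (b : hS.comp g → hS.comp h → M),
      hS.IsBalanced g h b → ∃! φ : T →+ M, ∀ a x, φ (t a x) = b a x :=
    fun M _ b hb => tuniv M b hb.1 hb.2.1 hb.2.2
  obtain ⟨m', hm', -⟩ := univ _ _ (GroupoidGrading.isBalanced_mul g h)
  have hm_eq : m = (hS.comp (g ≫ h)).subtype.comp m' :=
    GroupoidGrading.hom_ext_of_universal univ ht fun a x => by simp [hm, hm']
  have hea : ∀ a ∈ hS.comp g, e * a = a :=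
    fun a => hS.mul_eq_self_of_forall_aMul g fun _ k _ => hstr.mul_eq_self_of_mem_aMul
      (fun x hx => (hid x hx).1) k
  obtain ⟨F, hFt, hmF⟩ := ht.exists_lift_mulLeft m hm he
  have hFm' : F.comp m' = AddMonoidHom.id T :=
    GroupoidGrading.hom_ext_of_universal univ ht fun a x => by
      simp [hm', hFt a x a (hea a a.2).symm]
  have hm_factor : ∀ τ, m τ = e * m' τ := fun τ => by
    rw [← hmF, ← AddMonoidHom.comp_apply F m', hFm', hm_eq]; rfl
  refine ⟨?_, ?_⟩
  · rw [hm_eq]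
    exact Subtype.val_injective.comp
      (Function.LeftInverse.injective (g := F) (DFunLike.congr_fun hFm'))
  · ext y
    constructor
    · rintro ⟨τ, rfl⟩
      exact ⟨m' τ, (m' τ).2, (hm_factor τ).symm⟩
    · rintro ⟨z, hz, rfl⟩
      exact ⟨F ⟨z, hz⟩, hmF _⟩
end
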